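/- arXiv:2310.20122 — 3 statements merged into one kernel-verified Lean document; each statement's English description precedes it below -/
import Mathlib

section
/- Let R : J → M_d(ℝ) be continuous, B₂ : J → M_d(ℝ) be C³ with B₂″ + B₂R = 0, and C : J → ℝ be C³ with C″(s)B₂(s) + 2C′(s)B₂′(s) = 0 on J. Then for every s ∈ J: C′(s)C‴(s)B₂(s) − (3/2)(C″(s))²B₂(s) − 2(C′(s))²B₂(s)R(s) = 0. Consequently, if at some point ε ∈ J the matrix B₂(ε) is invertible and C′(ε) ≠ 0, then R(ε) = κ·I where κ = C‴(ε)/(2C′(ε)) − 3(C″(ε))²/(4C′(ε)²). -/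
attribute [local instance] Matrix.normedAddCommGroup Matrix.normedSpace

/-!
Differentiating `C″B₂ + 2C′B₂′ = 0` gives `C‴B₂ + 3C″B₂′ + 2C′B₂″ = 0`. Multiplying by `C′` and
using the original relation to replace `C′B₂′` by `-C″B₂/2` eliminates `B₂′`, and the Jacobi
equation turns `B₂″` into `-B₂R`. Where `B₂` is invertible the result reads `R = κ • 1`, with
`κ = C‴/(2C′) - 3C″²/(4C′²)` half the Schwarzian derivative of `C`.
-/

open Filter Topology

theorem ContDiffOn.differentiableAt_iterate_deriv {E : Type*} [NormedAddCommGroup E]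
    [NormedSpace ℝ E] {J : Set ℝ} (hJ : IsOpen J) {s : ℝ} (hs : s ∈ J) :
    ∀ {n k : ℕ} {f : ℝ → E}, ContDiffOn ℝ n f J → k < n → DifferentiableAt ℝ (deriv^[k] f) s
  | n, 0, _, hf, hk =>
      (hf.differentiableOn (by exact_mod_cast (by omega : n ≠ 0))).differentiableAt (hJ.mem_nhds hs)
  | n + 1, k + 1, f, hf, hk => by
      rw [Function.iterate_succ_apply]
      exact differentiableAt_iterate_deriv hJ hs (hf.deriv_of_isOpen hJ le_rfl) (by omega)
  | 0, _ + 1, _, _, hk => absurd hk (by omega)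

section RelationDerivative

variable {E : Type*} [NormedAddCommGroup E] [NormedSpace ℝ E] {c : ℝ → ℝ} {B : ℝ → E} {s : ℝ}

theorem deriv_relation_eq_zero (hc' : DifferentiableAt ℝ (deriv c) s)
    (hc'' : DifferentiableAt ℝ (deriv (deriv c)) s) (hB : DifferentiableAt ℝ B s)
    (hB' : DifferentiableAt ℝ (deriv B) s)
    (hrel : ∀ᶠ t in 𝓝 s, deriv (deriv c) t • B t + (2 * deriv c t) • deriv B t = 0) :
    deriv (deriv (deriv c)) s • B s + (3 * deriv (deriv c) s) • deriv B s
      + (2 * deriv c s) • deriv (deriv B) s = 0 := by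
  have hderiv := (hc''.hasDerivAt.smul hB.hasDerivAt).add
    ((hc'.hasDerivAt.const_mul 2).smul hB'.hasDerivAt)
  have hrel_fun : deriv (deriv c) • B + (fun t ↦ 2 * deriv c t) • deriv B =ᶠ[𝓝 s] fun _ ↦ 0 := hrel
  have hzero := hderiv.deriv.symm.trans (hrel_fun.deriv_eq.trans (deriv_const s 0))
  linear_combination (norm := module) hzero

theorem relation_eliminating_deriv_eq_zero (hc' : DifferentiableAt ℝ (deriv c) s)
    (hc'' : DifferentiableAt ℝ (deriv (deriv c)) s) (hB : DifferentiableAt ℝ B s)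
    (hB' : DifferentiableAt ℝ (deriv B) s)
    (hrel : ∀ᶠ t in 𝓝 s, deriv (deriv c) t • B t + (2 * deriv c t) • deriv B t = 0) :
    (deriv c s * deriv (deriv (deriv c)) s) • B s - ((3 / 2 : ℝ) * deriv (deriv c) s ^ 2) • B s
      + (2 * deriv c s ^ 2) • deriv (deriv B) s = 0 := by
  linear_combination (norm := module) deriv c s • deriv_relation_eq_zero hc' hc'' hB hB' hrel
    - ((3 / 2 : ℝ) * deriv (deriv c) s) • hrel.self_of_nhds

end RelationDerivative

theorem IsUnit.eq_smul_one_of_mul_eq_smul {A : Type*} [Ring A] [Algebra ℝ A] {x r : A}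
    (hx : IsUnit x) {k : ℝ} (h : x * r = k • x) : r = k • 1 :=
  hx.mul_left_cancel (by rw [h, mul_smul_comm, mul_one])

theorem curvature_matrix_is_scalar_general (d : ℕ) (J : Set ℝ) (hJ : IsOpen J)
    (R B₂ : ℝ → Matrix (Fin d) (Fin d) ℝ) (C : ℝ → ℝ)
    (hB₂ : ContDiffOn ℝ 3 B₂ J) (hC : ContDiffOn ℝ 3 C J)
    (hODE : ∀ s ∈ J, deriv (deriv B₂) s + B₂ s * R s = 0)
    (hrel : ∀ s ∈ J, (deriv (deriv C) s) • B₂ s + (2 * deriv C s) • deriv B₂ s = 0) :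
    (∀ s ∈ J,
      (deriv C s * deriv (deriv (deriv C)) s) • B₂ s
        - ((3 / 2 : ℝ) * (deriv (deriv C) s) ^ 2) • B₂ s
        - (2 * (deriv C s) ^ 2) • (B₂ s * R s) = 0) ∧
    ∀ ε ∈ J, IsUnit (B₂ ε) → deriv C ε ≠ 0 →
      R ε = (deriv (deriv (deriv C)) ε / (2 * deriv C ε)
        - 3 * (deriv (deriv C) ε) ^ 2 / (4 * (deriv C ε) ^ 2))
          • (1 : Matrix (Fin d) (Fin d) ℝ) := by
  have main : ∀ s ∈ J, (deriv C s * deriv (deriv (deriv C)) s) • B₂ s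
      - ((3 / 2 : ℝ) * (deriv (deriv C) s) ^ 2) • B₂ s
      - (2 * (deriv C s) ^ 2) • (B₂ s * R s) = 0 := by
    intro s hs
    have hrel_near : ∀ᶠ t in 𝓝 s, _ := eventually_of_mem (hJ.mem_nhds hs) hrel
    have key : (deriv C s * deriv (deriv (deriv C)) s) • B₂ s
        - ((3 / 2 : ℝ) * deriv (deriv C) s ^ 2) • B₂ s
        + (2 * deriv C s ^ 2) • deriv (deriv B₂) s = 0 := relation_eliminating_deriv_eq_zero
      (hC.differentiableAt_iterate_deriv hJ hs (k := 1) (by norm_num))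
      (hC.differentiableAt_iterate_deriv hJ hs (k := 2) (by norm_num))
      (hB₂.differentiableAt_iterate_deriv hJ hs (k := 0) (by norm_num))
      (hB₂.differentiableAt_iterate_deriv hJ hs (k := 1) (by norm_num)) hrel_near
    linear_combination (norm := module) key - (2 * deriv C s ^ 2) • hODE s hs
  refine ⟨main, fun ε hε hunit hC' => hunit.eq_smul_one_of_mul_eq_smul ?_⟩
  have hscaled : (2 * deriv C ε ^ 2) • (B₂ ε * R ε) = (2 * deriv C ε ^ 2) •
      ((deriv (deriv (deriv C)) ε / (2 * deriv C ε)
        - 3 * deriv (deriv C) ε ^ 2 / (4 * deriv C ε ^ 2)) • B₂ ε) := by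
    rw [smul_smul, ← sub_eq_zero, ← neg_eq_zero, ← main ε hε]
    field_simp
    module
  exact smul_right_injective _ (by positivity) hscaled

/-- From C″B₂ + 2C′B₂′ = 0 and the Jacobi ODE one deduces
C′C‴B₂ − (3/2)(C″)²B₂ − 2(C′)²B₂R = 0; at points where B₂ is invertible and
C′ ≠ 0 the curvature matrix R is a scalar multiple of the identity. -/
theorem curvature_matrix_is_scalar (d : ℕ) (J : Set ℝ) (hJ : IsOpen J)
    (R B₂ : ℝ → Matrix (Fin d) (Fin d) ℝ) (C : ℝ → ℝ)
    (hR : ContinuousOn R J) (hB₂ : ContDiffOn ℝ 3 B₂ J) (hC : ContDiffOn ℝ 3 C J)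
    (hODE : ∀ s ∈ J, deriv (deriv B₂) s + B₂ s * R s = 0)
    (hrel : ∀ s ∈ J, (deriv (deriv C) s) • B₂ s + (2 * deriv C s) • deriv B₂ s = 0) :
    (∀ s ∈ J,
      (deriv C s * deriv (deriv (deriv C)) s) • B₂ s
        - ((3 / 2 : ℝ) * (deriv (deriv C) s) ^ 2) • B₂ s
        - (2 * (deriv C s) ^ 2) • (B₂ s * R s) = 0) ∧
    ∀ ε ∈ J, IsUnit (B₂ ε) → deriv C ε ≠ 0 →
      R ε = (deriv (deriv (deriv C)) ε / (2 * deriv C ε)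
        - 3 * (deriv (deriv C) ε) ^ 2 / (4 * (deriv C ε) ^ 2))
          • (1 : Matrix (Fin d) (Fin d) ℝ) :=
  curvature_matrix_is_scalar_general d J hJ R B₂ C hB₂ hC hODE hrel
end

section
/- There do not exist real 3×3 matrices G₁ and G₃ such that for all ξ₁, ξ₂ ∈ ℝ, setting v = (−ξ₂, −ξ₁, 1) ∈ ℝ³, one has −10ξ₁⁴ = −⟨v, G₁v⟩ + (−ξ₂)·⟨v, G₃v⟩. -/
/-! On the line `ξ₂ = 0` the `G₃` term drops out and `v = (0, -ξ₁, 1)` is affine in `ξ₁`, so the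
right side `-⟨v, G₁ v⟩` is a polynomial of degree at most `2` in `ξ₁`, while `-10 ξ₁⁴` is not. -/

open Matrix

theorem dotProduct_mulVec_add_smul {R n : Type*} [CommRing R] [Fintype n]
    (G : Matrix n n R) (u w : n → R) (t : R) :
    (u + t • w) ⬝ᵥ G *ᵥ (u + t • w) =
      u ⬝ᵥ G *ᵥ u + t * (u ⬝ᵥ G *ᵥ w + w ⬝ᵥ G *ᵥ u) + t ^ 2 * (w ⬝ᵥ G *ᵥ w) := by
  simp only [mulVec_add, mulVec_smul, add_dotProduct, dotProduct_add, smul_dotProduct,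
    dotProduct_smul, smul_eq_mul]
  ring

/-- Comparing the values at `t = 0, 1, -1, 2` gives `12 k = 0`. -/
theorem eq_zero_of_forall_quadratic_eq_mul_pow_four {K : Type*} [Field K] [CharZero K]
    {a b c k : K} (h : ∀ t : K, a + t * b + t ^ 2 * c = k * t ^ 4) : k = 0 := by
  have h0 := h 0
  have h1 := h 1
  have hm1 := h (-1)
  have h2 := h 2
  have h12 : (12 : K) * k = 0 := by linear_combination -h2 - 3 * h0 + 3 * h1 + hm1
  simpa using h12

/-- No Christoffel symbols (encoded by G₁, G₃) can make the geodesic equation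
hold for the phase x·ξ + tξ₁ξ₂ + t²ξ₁⁵. -/
theorem no_metric_for_quintic_phase :
    ¬ ∃ G₁ G₃ : Matrix (Fin 3) (Fin 3) ℝ, ∀ ξ₁ ξ₂ : ℝ,
      (-10 : ℝ) * ξ₁ ^ 4 =
        -(dotProduct ![-ξ₂, -ξ₁, 1] (G₁.mulVec ![-ξ₂, -ξ₁, 1]))
          + (-ξ₂) * dotProduct ![-ξ₂, -ξ₁, 1] (G₃.mulVec ![-ξ₂, -ξ₁, 1]) := by
  rintro ⟨G₁, G₃, h⟩
  set u : Fin 3 → ℝ := ![0, 0, 1]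
  set w : Fin 3 → ℝ := ![0, -1, 0]
  have hv (t : ℝ) : ![-0, -t, 1] = u + t • w := by
    ext i; fin_cases i <;> simp [u, w]
  have hquad (t : ℝ) : u ⬝ᵥ G₁ *ᵥ u + t * (u ⬝ᵥ G₁ *ᵥ w + w ⬝ᵥ G₁ *ᵥ u)
      + t ^ 2 * (w ⬝ᵥ G₁ *ᵥ w) = 10 * t ^ 4 := by
    have := h t 0
    rw [hv, dotProduct_mulVec_add_smul] at this
    linarith
  exact absurd (eq_zero_of_forall_quadratic_eq_mul_pow_four hquad) (by norm_num)
end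

section
/- For every constant 2×2 real matrix H with ‖H‖ ≤ 1/2 (operator norm) and every 2×2 real matrix M, the function t ↦ det(M + t(I + H)) is a quadratic polynomial in t whose leading coefficient det(I + H) satisfies det(I + H) ≥ 1/4, and therefore ∫_{−1}^{1} |det(M + t(I + H))| dt ≥ δ₀ for some absolute constant δ₀ > 0. -/
/-- If `β² ≰ αγ` for a PSD binary quadratic form, contradiction: discriminant
condition for a nonnegative quadratic form `αx² + 2βxy + γy²`. -/
lemma det_aux_psd_discrim (α β γ : ℝ) (hα : 0 ≤ α) (hγ : 0 ≤ γ)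
    (hG : ∀ x y : ℝ, 0 ≤ α*x^2 + 2*β*x*y + γ*y^2) : β^2 ≤ α*γ := by
  have hA : 0 ≤ α*(α*γ - β^2) := by have := hG β (-α); nlinarith
  have hB : 0 ≤ γ*(α*γ - β^2) := by have := hG (-γ) β; nlinarith
  have h11 := hG 1 1
  have h1m := hG 1 (-1)
  rcases eq_or_lt_of_le (by linarith : (0:ℝ) ≤ α + γ) with h0 | h0
  · have hα0 : α = 0 := by linarith
    have hγ0 : γ = 0 := by linarith
    have hβ0 : β = 0 := by nlinarith
    simp [hα0, hγ0, hβ0]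
  · nlinarith [hA, hB, h0]

/-- If a 2×2 matrix with entries `p q / r s` satisfies `‖Av‖² ≥ ¼‖v‖²` for all `v`
(in coordinates), with `p, s ≥ 1/2` and `q², r² ≤ 1/4`, then `det = ps - qr ≥ 1/4`. -/
lemma det_aux_lower (p q r s : ℝ)
    (hK : ∀ x y : ℝ, 1/4*(x^2+y^2) ≤ (p*x+q*y)^2 + (r*x+s*y)^2)
    (hp : 1/2 ≤ p) (hs : 1/2 ≤ s) (hq : q^2 ≤ 1/4) (hr : r^2 ≤ 1/4) :
    1/4 ≤ p*s - q*r := by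
  have hα : 0 ≤ p^2 + r^2 - 1/4 := by nlinarith [hK 1 0]
  have hγ : 0 ≤ q^2 + s^2 - 1/4 := by nlinarith [hK 0 1]
  have hbound : (p*q + r*s)^2 ≤ (p^2 + r^2 - 1/4) * (q^2 + s^2 - 1/4) :=
    det_aux_psd_discrim _ _ _ hα hγ (fun x y => by nlinarith [hK x y])
  have hsq : 1/16 ≤ (p*s - q*r)^2 := by nlinarith [hbound]
  have hx0 : 0 ≤ p*s - q*r := by
    nlinarith [sq_nonneg (q-r),
      mul_nonneg (by linarith : (0:ℝ) ≤ p - 1/2) (by linarith : (0:ℝ) ≤ s - 1/2)]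
  nlinarith [hsq, hx0]

/-- Reverse triangle inequality in coordinates on ℝ². -/
lemma det_aux_rev_tri (x y hx hy : ℝ) (h : hx^2 + hy^2 ≤ 1/4*(x^2+y^2)) :
    1/4*(x^2+y^2) ≤ (x+hx)^2+(y+hy)^2 := by
  nlinarith [sq_nonneg (x*hy - y*hx), sq_nonneg (x+hx), sq_nonneg (y+hy),
    mul_nonneg (sub_nonneg.2 h)
      (by nlinarith [sq_nonneg x, sq_nonneg y, sq_nonneg hx, sq_nonneg hy] :
        (0:ℝ) ≤ 9/4*(x^2+y^2) - (hx^2+hy^2)),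
    sq_nonneg (2*(x*hx+y*hy) + 3/4*(x^2+y^2) + (hx^2+hy^2))]

/-- Chebyshev-type L¹ lower bound for quadratics with leading coefficient ≥ 1/4. -/
lemma quad_integral_lower (a b c : ℝ) (ha : 1/4 ≤ a) :
    (1/8 : ℝ) ≤ ∫ t in (-1:ℝ)..1, |a*t^2 + b*t + c| := by
  have hq : Continuous fun t : ℝ => a*t^2 + b*t + c := by fun_prop
  have hf : Continuous fun t : ℝ => |a*t^2 + b*t + c| := hq.abs
  have hpoly : ∀ u v : ℝ, (∫ t in u..v, (a*t^2 + b*t + c))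
      = a*(v^3-u^3)/3 + b*(v^2-u^2)/2 + c*(v-u) := by
    intro u v
    have h1 : IntervalIntegrable (fun t : ℝ => a*t^2) MeasureTheory.volume u v :=
      (by fun_prop : Continuous fun t : ℝ => a*t^2).intervalIntegrable u v
    have h2 : IntervalIntegrable (fun t : ℝ => b*t) MeasureTheory.volume u v :=
      (by fun_prop : Continuous fun t : ℝ => b*t).intervalIntegrable u v
    have h3 : IntervalIntegrable (fun t : ℝ => (c:ℝ)) MeasureTheory.volume u v :=
      intervalIntegrable_const
    rw [intervalIntegral.integral_add (h1.add h2) h3,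
      intervalIntegral.integral_add h1 h2,
      intervalIntegral.integral_const_mul, intervalIntegral.integral_const_mul,
      integral_pow, integral_id, intervalIntegral.integral_const]
    push_cast [smul_eq_mul]
    ring
  have hsplit : (∫ t in (-1:ℝ)..1, |a*t^2 + b*t + c|)
      = (∫ t in (-1:ℝ)..(-1/2:ℝ), |a*t^2 + b*t + c|)
      + (∫ t in (-1/2:ℝ)..(1/2:ℝ), |a*t^2 + b*t + c|)
      + (∫ t in (1/2:ℝ)..(1:ℝ), |a*t^2 + b*t + c|) := by
    rw [intervalIntegral.integral_add_adjacent_intervals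
        (hf.intervalIntegrable _ _) (hf.intervalIntegrable _ _),
      intervalIntegral.integral_add_adjacent_intervals
        (hf.intervalIntegrable _ _) (hf.intervalIntegrable _ _)]
  have m1 : (∫ t in (-1:ℝ)..(-1/2:ℝ), (a*t^2 + b*t + c))
      ≤ ∫ t in (-1:ℝ)..(-1/2:ℝ), |a*t^2 + b*t + c| := by
    apply intervalIntegral.integral_mono_on (by norm_num)
      (hq.intervalIntegrable _ _) (hf.intervalIntegrable _ _)
    intro t _; exact le_abs_self _
  have m3 : (∫ t in (1/2:ℝ)..(1:ℝ), (a*t^2 + b*t + c))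
      ≤ ∫ t in (1/2:ℝ)..(1:ℝ), |a*t^2 + b*t + c| := by
    apply intervalIntegral.integral_mono_on (by norm_num)
      (hq.intervalIntegrable _ _) (hf.intervalIntegrable _ _)
    intro t _; exact le_abs_self _
  have m2 : -(∫ t in (-1/2:ℝ)..(1/2:ℝ), (a*t^2 + b*t + c))
      ≤ ∫ t in (-1/2:ℝ)..(1/2:ℝ), |a*t^2 + b*t + c| := by
    rw [← intervalIntegral.integral_neg]
    apply intervalIntegral.integral_mono_on (by norm_num)
      (hq.neg.intervalIntegrable _ _) (hf.intervalIntegrable _ _)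
    intro t _; exact neg_le_abs _
  rw [hsplit]
  have e1 := hpoly (-1) (-1/2)
  have e2 := hpoly (-1/2) (1/2)
  have e3 := hpoly (1/2) 1
  rw [e1] at m1; rw [e2] at m2; rw [e3] at m3
  norm_num at m1 m2 m3 ⊢
  nlinarith [m1, m2, m3, ha]

/-- Uniform lower bound for ∫_{-1}^1 |det(M + t(I+H))| dt over all M, for
constant H with operator norm ≤ 1/2: the integrand is a quadratic polynomial
in t with leading coefficient det(I+H) ≥ 1/4. -/
theorem determinant_integral_lower_bound :
    ∃ δ₀ : ℝ, 0 < δ₀ ∧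
      ∀ M H : Matrix (Fin 2) (Fin 2) ℝ,
        (∀ v : EuclideanSpace ℝ (Fin 2),
            ‖(EuclideanSpace.equiv (Fin 2) ℝ).symm
                (H.mulVec (EuclideanSpace.equiv (Fin 2) ℝ v))‖ ≤ 1 / 2 * ‖v‖) →
        (∃ b c : ℝ, ∀ t : ℝ,
            (M + t • ((1 : Matrix (Fin 2) (Fin 2) ℝ) + H)).det
              = ((1 : Matrix (Fin 2) (Fin 2) ℝ) + H).det * t ^ 2 + b * t + c) ∧
        (1 / 4 : ℝ) ≤ ((1 : Matrix (Fin 2) (Fin 2) ℝ) + H).det ∧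
        δ₀ ≤ ∫ t in (-1 : ℝ)..1, |(M + t • ((1 : Matrix (Fin 2) (Fin 2) ℝ) + H)).det| := by
  refine ⟨1/8, by norm_num, fun M H hH => ?_⟩
  -- coordinate form of the operator norm hypothesis
  have hsq : ∀ x y : ℝ,
      (H 0 0*x + H 0 1*y)^2 + (H 1 0*x + H 1 1*y)^2 ≤ 1/4*(x^2+y^2) := by
    intro x y
    have h := hH ((EuclideanSpace.equiv (Fin 2) ℝ).symm ![x, y])
    rw [ContinuousLinearEquiv.apply_symm_apply] at h
    rw [EuclideanSpace.norm_eq, EuclideanSpace.norm_eq] at h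
    simp only [PiLp.continuousLinearEquiv_symm_apply, PiLp.toLp_apply,
      Matrix.mulVec, dotProduct, Fin.sum_univ_two, Real.norm_eq_abs, sq_abs,
      Matrix.cons_val_zero, Matrix.cons_val_one, Matrix.head_cons] at h
    have h1 : (0:ℝ) ≤ (H 0 0*x + H 0 1*y)^2 + (H 1 0*x + H 1 1*y)^2 := by positivity
    have h2 : (0:ℝ) ≤ x^2 + y^2 := by positivity
    nlinarith [h, Real.sq_sqrt h1, Real.sq_sqrt h2, Real.sqrt_nonneg
      ((H 0 0*x + H 0 1*y)^2 + (H 1 0*x + H 1 1*y)^2), Real.sqrt_nonneg (x^2 + y^2)]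
  -- entry bounds
  have hE1 := hsq 1 0
  have hE2 := hsq 0 1
  have h00 : (H 0 0)^2 ≤ 1/4 := by nlinarith [sq_nonneg (H 1 0)]
  have h10 : (H 1 0)^2 ≤ 1/4 := by nlinarith [sq_nonneg (H 0 0)]
  have h01 : (H 0 1)^2 ≤ 1/4 := by nlinarith [sq_nonneg (H 1 1)]
  have h11 : (H 1 1)^2 ≤ 1/4 := by nlinarith [sq_nonneg (H 0 1)]
  -- lower bound on the quadratic form of I + H
  have hK : ∀ x y : ℝ, 1/4*(x^2+y^2)
      ≤ ((1 + H 0 0)*x + H 0 1*y)^2 + (H 1 0*x + (1 + H 1 1)*y)^2 := by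
    intro x y
    have := det_aux_rev_tri x y (H 0 0*x + H 0 1*y) (H 1 0*x + H 1 1*y) (hsq x y)
    calc 1/4*(x^2+y^2) ≤ (x + (H 0 0*x + H 0 1*y))^2 + (y + (H 1 0*x + H 1 1*y))^2 := this
      _ = ((1 + H 0 0)*x + H 0 1*y)^2 + (H 1 0*x + (1 + H 1 1)*y)^2 := by ring
  -- determinant formula
  have hdet : ((1 : Matrix (Fin 2) (Fin 2) ℝ) + H).det
      = (1 + H 0 0)*(1 + H 1 1) - H 0 1 * H 1 0 := by
    simp [Matrix.det_fin_two, Matrix.add_apply, Matrix.one_apply]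
  have hdetge : (1/4 : ℝ) ≤ ((1 : Matrix (Fin 2) (Fin 2) ℝ) + H).det := by
    rw [hdet]
    exact det_aux_lower _ _ _ _ hK (by nlinarith) (by nlinarith) h01 h10
  -- polynomial expansion
  set A : Matrix (Fin 2) (Fin 2) ℝ := (1 : Matrix (Fin 2) (Fin 2) ℝ) + H with hA
  have hAe : ∀ t : ℝ, (M + t • A).det
      = A.det * t^2 + (M 0 0 * A 1 1 + A 0 0 * M 1 1 - M 0 1 * A 1 0 - A 0 1 * M 1 0) * t
        + M.det := by
    intro t
    simp only [Matrix.det_fin_two, Matrix.add_apply, Matrix.smul_apply, smul_eq_mul]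
    ring
  refine ⟨⟨_, _, hAe⟩, hdetge, ?_⟩
  have hcong : (fun t : ℝ => |(M + t • A).det|)
      = fun t : ℝ => |A.det * t^2
        + (M 0 0 * A 1 1 + A 0 0 * M 1 1 - M 0 1 * A 1 0 - A 0 1 * M 1 0) * t + M.det| :=
    funext fun t => by rw [hAe t]
  calc (1/8 : ℝ) ≤ _ := quad_integral_lower A.det _ _ hdetge
    _ = ∫ t in (-1 : ℝ)..1, |(M + t • A).det| := by rw [hcong]
end
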